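/- Let K be a field equipped with a multiplicative nonarchimedean norm |·|. Fix z ∈ K with |z| ≤ 1 and r ∈ [0,1]. Define α_{z,r} : K[T] → ℝ≥0 by α_{z,r}(f) = max_i r^i |(D_i f)(z)|, where D_i f denotes the i-th Hasse derivative of f (so that D_i f = (1/i!) d^i f/dT^i in characteristic zero). Then α_{z,r} is a multiplicative seminorm on K[T] bounded above by the Gauss norm (the norm sending ∑_i a_i T^i to max_i |a_i|). -/

import Mathlib

open scoped NNReal

/-- A multiplicative (nonarchimedean) seminorm on a commutative ring. -/
def IsMultSeminorm {A : Type*} [CommRing A] (α : A → ℝ≥0) : Prop :=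
  α 0 = 0 ∧ (∀ g h : A, α (g - h) ≤ max (α g) (α h)) ∧
    α 1 = 1 ∧ ∀ g h : A, α (g * h) = α g * α h

/-- A multiplicative nonarchimedean norm on a field. -/
def IsMultNorm {K : Type*} [Field K] (ν : K → ℝ≥0) : Prop :=
  IsMultSeminorm ν ∧ ∀ x : K, ν x = 0 ↔ x = 0

/-- The Gauss norm on `K[T]`, sending `∑_i a_i T^i` to `max_i ν (a_i)`. -/
noncomputable def gaussNorm {K : Type*} [Field K] (ν : K → ℝ≥0)
    (f : Polynomial K) : ℝ≥0 :=
  f.support.sup fun i => ν (f.coeff i)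

/-- The seminorm `α_{z,r}(f) = max_i r^i ν((D_i f)(z))`, where `D_i` is the
`i`-th Hasse derivative. -/
noncomputable def discPointSeminorm {K : Type*} [Field K] (ν : K → ℝ≥0)
    (z : K) (r : ℝ≥0) (f : Polynomial K) : ℝ≥0 :=
  ⨆ i : ℕ, r ^ i * ν ((Polynomial.hasseDeriv i f).eval z)

/-!
Taylor expansion at `z` is a ring automorphism `f ↦ f(T + z)` of `K[T]` whose `i`-th coefficient
is `(D_i f)(z)`, so `α_{z,r}` is the Gauss norm of radius `r` of the Taylor expansion. The Gauss
norm of a nonarchimedean absolute value is multiplicative (Gauss's lemma: look at the first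
indices where the maxima of `p` and `q` are attained), hence so is `α_{z,r}`. The bound by the
Gauss norm holds because binomial coefficients and powers of `z` have norm at most `1`.
-/

open scoped Polynomial

namespace IsMultSeminorm

lemma comp_ringHom {A B : Type*} [CommRing A] [CommRing B] {α : B → ℝ≥0}
    (hα : IsMultSeminorm α) (φ : A →+* B) : IsMultSeminorm (α ∘ φ) := by
  obtain ⟨h0, hsub, h1, hmul⟩ := hα
  refine ⟨?_, fun g h => ?_, ?_, fun g h => ?_⟩ <;>
    simp only [Function.comp_apply, map_zero, map_sub, map_one, map_mul, *]

end IsMultSeminorm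

namespace Polynomial

variable {R : Type*} {c : ℝ}

lemma gaussNorm_neg [Ring R] {v : AbsoluteValue R ℝ} (p : R[X]) :
    (-p).gaussNorm v c = p.gaussNorm v c := by
  simp only [gaussNorm, support_neg, coeff_neg, AbsoluteValue.map_neg]

/-- `Polynomial.gaussNorm_mul` needs `0 < c`; at `c = 0` the Gauss norm is `v (p.coeff 0)`. -/
lemma gaussNorm_mul_of_nonneg [Ring R] {v : AbsoluteValue R ℝ} (hna : IsNonarchimedean v)
    (hc : 0 ≤ c) (p q : R[X]) :
    (p * q).gaussNorm v c = p.gaussNorm v c * q.gaussNorm v c := by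
  rcases hc.eq_or_lt with rfl | hc
  · simp only [gaussNorm_zero_right, mul_coeff_zero, map_mul]
  · exact gaussNorm_mul hna hc p q

lemma isMultSeminorm_toNNReal_gaussNorm [CommRing R] [IsDomain R] {v : AbsoluteValue R ℝ}
    (hna : IsNonarchimedean v) (hc : 0 ≤ c) :
    IsMultSeminorm fun p : R[X] => (p.gaussNorm v c).toNNReal := by
  refine ⟨by simp, fun p q => ?_, by simp [← C_1, -map_one, v.map_one], fun p q => ?_⟩
  · rw [← Real.toNNReal_monotone.map_max, sub_eq_add_neg, ← gaussNorm_neg q]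
    exact Real.toNNReal_le_toNNReal (isNonarchimedean_gaussNorm v hna hc p (-q))
  · dsimp only
    rw [gaussNorm_mul_of_nonneg hna hc,
      Real.toNNReal_mul (p.gaussNorm_nonneg v hc)]

end Polynomial

namespace IsMultNorm

variable {K : Type*} [Field K] {ν : K → ℝ≥0} (hν : IsMultNorm ν)
include hν

protected lemma map_zero : ν 0 = 0 := hν.1.1

protected lemma map_mul (a b : K) : ν (a * b) = ν a * ν b := hν.1.2.2.2 a b

lemma map_sub_le (a b : K) : ν (a - b) ≤ max (ν a) (ν b) := hν.1.2.1 a b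

protected lemma map_neg (a : K) : ν (-a) = ν a := by
  refine le_antisymm ?_ ?_
  · simpa [hν.map_zero] using hν.map_sub_le 0 a
  · simpa [hν.map_zero] using hν.map_sub_le 0 (-a)

lemma isNonarchimedean : IsNonarchimedean ν := fun a b => by
  simpa [hν.map_neg] using hν.map_sub_le a (-b)

def toAbsoluteValue : AbsoluteValue K ℝ where
  toFun a := ν a
  map_mul' a b := by simp [hν.map_mul]
  nonneg' a := (ν a).2
  eq_zero' a := by simp [hν.2]
  add_le' a b := by
    exact_mod_cast IsNonarchimedean.add_le (fun _ => zero_le) hν.isNonarchimedean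

@[simp]
lemma toAbsoluteValue_apply (a : K) : hν.toAbsoluteValue a = ν a := rfl

lemma isNonarchimedean_toAbsoluteValue : IsNonarchimedean hν.toAbsoluteValue := fun a b => by
  exact_mod_cast hν.isNonarchimedean a b

protected lemma map_pow (a : K) (n : ℕ) : ν (a ^ n) = ν a ^ n := by
  have : hν.toAbsoluteValue (a ^ n) = hν.toAbsoluteValue a ^ n := map_pow _ a n
  simp only [toAbsoluteValue_apply] at this
  exact_mod_cast this

lemma apply_natCast_le_one (n : ℕ) : ν n ≤ 1 := by
  have : hν.toAbsoluteValue n ≤ 1 := hν.isNonarchimedean_toAbsoluteValue.apply_natCast_le_one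
  exact_mod_cast this

lemma apply_sum_le_sup {ι : Type*} (s : Finset ι) (g : ι → K) :
    ν (∑ i ∈ s, g i) ≤ s.sup fun i => ν (g i) := by
  rcases s.eq_empty_or_nonempty with rfl | hs
  · simp [hν.map_zero]
  · simpa [Finset.sup'_eq_sup] using hν.isNonarchimedean.apply_sum_le_sup hs

lemma apply_coeff_le_gaussNorm (f : K[X]) (n : ℕ) : ν (f.coeff n) ≤ gaussNorm ν f := by
  by_cases hn : n ∈ f.support
  · exact Finset.le_sup (f := fun i => ν (f.coeff i)) hn
  · simp [Polynomial.notMem_support_iff.mp hn, hν.map_zero]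

lemma apply_eval_le_gaussNorm {z : K} (hz : ν z ≤ 1) (f : K[X]) :
    ν (f.eval z) ≤ gaussNorm ν f := by
  rw [Polynomial.eval_eq_sum, Polynomial.sum_def]
  refine (hν.apply_sum_le_sup _ _).trans (Finset.sup_mono_fun fun n _ => ?_)
  rw [hν.map_mul, hν.map_pow]
  exact mul_le_of_le_one_right zero_le (pow_le_one₀ zero_le hz)

lemma gaussNorm_hasseDeriv_le (i : ℕ) (f : K[X]) :
    gaussNorm ν (Polynomial.hasseDeriv i f) ≤ gaussNorm ν f := by
  refine Finset.sup_le fun n _ => ?_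
  rw [Polynomial.hasseDeriv_coeff, hν.map_mul]
  calc _ ≤ 1 * ν (f.coeff (n + i)) := by gcongr; exact hν.apply_natCast_le_one _
    _ ≤ gaussNorm ν f := by rw [one_mul]; exact hν.apply_coeff_le_gaussNorm f _

lemma discPointSeminorm_le_gaussNorm {z : K} (hz : ν z ≤ 1) {r : ℝ≥0} (hr : r ≤ 1)
    (f : K[X]) : discPointSeminorm ν z r f ≤ gaussNorm ν f := by
  refine ciSup_le fun i => ?_
  calc _ ≤ 1 * ν ((Polynomial.hasseDeriv i f).eval z) := by
        gcongr; exact pow_le_one₀ zero_le hr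
    _ ≤ gaussNorm ν f := by
      rw [one_mul]
      exact (hν.apply_eval_le_gaussNorm hz _).trans (hν.gaussNorm_hasseDeriv_le i f)

lemma discPointSeminorm_eq_gaussNorm_taylor (z : K) (r : ℝ≥0) :
    discPointSeminorm ν z r =
      (fun p : K[X] => (p.gaussNorm hν.toAbsoluteValue r).toNNReal) ∘
        Polynomial.taylorAlgHom z := by
  funext f
  have h : (Polynomial.taylor z f).gaussNorm hν.toAbsoluteValue r =
      discPointSeminorm ν z r f := by
    rw [← Polynomial.gaussNorm_coe_powerSeries _ _ r.coe_nonneg, PowerSeries.gaussNorm_eq,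
      discPointSeminorm, NNReal.coe_iSup]
    refine iSup_congr fun i => ?_
    simp [Polynomial.coeff_coe, Polynomial.taylor_coeff, mul_comm]
  simp [h]

end IsMultNorm

theorem discPointSeminorm_isMultSeminorm
    {K : Type*} [Field K] (ν : K → ℝ≥0) (hν : IsMultNorm ν)
    (z : K) (hz : ν z ≤ 1) (r : ℝ≥0) (hr : r ≤ 1) :
    IsMultSeminorm (discPointSeminorm ν z r) ∧
      ∀ f : Polynomial K, discPointSeminorm ν z r f ≤ gaussNorm ν f := by
  refine ⟨?_, hν.discPointSeminorm_le_gaussNorm hz hr⟩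
  rw [hν.discPointSeminorm_eq_gaussNorm_taylor]
  exact (Polynomial.isMultSeminorm_toNNReal_gaussNorm hν.isNonarchimedean_toAbsoluteValue
    r.coe_nonneg).comp_ringHom (Polynomial.taylorAlgHom z).toRingHom
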